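/- For every k ≥ 1 and all h₁, h₂ ∈ H, one has [h₁h₂, x, (p^k−1)…, x] ≡ [h₁, x, (p^k−1)…, x] · [h₂, x, (p^k−1)…, x] modulo L_k, i.e. ([h₁,x,(p^k−1)…,x]·[h₂,x,(p^k−1)…,x])^{−1}·[h₁h₂,x,(p^k−1)…,x] ∈ L_k. (Lemma 5.1(ii) of the paper.) -/

import Mathlib

/-!
Commutators of elements of `H` lie in `Z`, which is central in `H`, so `H` has class
at most two and `[·, x]` maps `H` to `H` and `Z` to `Z`. Write `aᵣ = [a, x, (r)…, x]`
and let `ζᵣ(a, b) = (aᵣ bᵣ)⁻¹ (ab)ᵣ` be the defect of multiplicativity. It lies in `Z`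
and satisfies `ζᵣ₊₁(a, b) = [aᵣ₊₁, bᵣ] [ζᵣ(a, b), x]`, from which it is bimultiplicative
on `H`. Hence `ζᵣ(h₁, h₂)` lies in the subgroup generated by the `ζᵣ(cᵢ, cⱼ)`, and
unrolling the recursion shows `ζ_{p^k-1}(cᵢ, cⱼ) = w_{i,j,k}`.
-/

namespace Paper

variable {G : Type*} [Group G]

/-- The paper's commutator `[a,b] = a⁻¹ b⁻¹ a b`. -/
def pc {G : Type*} [Group G] (a b : G) : G := a⁻¹ * b⁻¹ * a * b

/-- The left-normed iterated commutator `[a, x, (r)…, x]`. -/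
def itc {G : Type*} [Group G] (x a : G) : ℕ → G
  | 0 => a
  | r + 1 => pc (itc x a r) x

/-- `c_i`, where `c_1 = y` and `c_{i+1} = [c_i, x]`; equivalently `c_i = [y, x, (i-1)…, x]`. -/
def cc (x y : G) (i : ℕ) : G := itc x y (i - 1)

/-- `z_{m,n} = [c_m, c_n]`. -/
def zz (x y : G) (m n : ℕ) : G := pc (cc x y m) (cc x y n)

/-- `H = ⟨c_i : i ≥ 1⟩`. -/
def Hsub (x y : G) : Subgroup G :=
  Subgroup.closure {g | ∃ i, 1 ≤ i ∧ g = cc x y i}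

/-- `Z = ⟨z_{m,n} : m, n ≥ 1⟩` (odd-prime case). -/
def ZsubP (x y : G) : Subgroup G :=
  Subgroup.closure {g | ∃ m n, 1 ≤ m ∧ 1 ≤ n ∧ g = zz x y m n}

/-- `w_{i,j,k} = ∏_{t=1}^{p^k−1} [z_{i+t,j+t−1}, x, (p^k−1−t)…, x]`,
factors in order of increasing `t` (reindexed by `t ↦ t+1`). -/
def wwP (p : ℕ) (x y : G) (i j k : ℕ) : G :=
  ((List.range (p ^ k - 1)).map
    (fun t => itc x (zz x y (i + t + 1) (j + t)) (p ^ k - 2 - t))).prod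

/-- `d_k(h) = [h,x,(p^k−1)…,x]⁻¹ · x^{−p^k} · (xh)^{p^k}`. -/
def ddP (p : ℕ) (x y : G) (k : ℕ) (h : G) : G :=
  (itc x h (p ^ k - 1))⁻¹ * (x ^ p ^ k)⁻¹ * (x * h) ^ p ^ k

/-- `L_k`, the normal closure of `{w_{i,j,k} : i,j ≥ 1} ∪ {d_k(y)} ∪ {z_{m,n} : m ≥ p^k, n ≥ 1}`. -/
def LsubP (p : ℕ) (x y : G) (k : ℕ) : Subgroup G :=
  Subgroup.normalClosure (({g | ∃ i j, 1 ≤ i ∧ 1 ≤ j ∧ g = wwP p x y i j k} ∪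
      {ddP p x y k y}) ∪
    {g | ∃ m n, p ^ k ≤ m ∧ 1 ≤ n ∧ g = zz x y m n})

/-- `Γ^{p^k} = ⟨g^{p^k} : g ∈ Γ⟩`. -/
def powSubP (G : Type*) [Group G] (p k : ℕ) : Subgroup G :=
  Subgroup.closure {g | ∃ a : G, g = a ^ p ^ k}

/-- `Θ̃_k = ⟨z_{m,n} : m ≥ p^k, n ≥ 1⟩`. -/
def ThetaT (p : ℕ) (x y : G) (k : ℕ) : Subgroup G :=
  Subgroup.closure {g | ∃ m n, p ^ k ≤ m ∧ 1 ≤ n ∧ g = zz x y m n}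

/-- `[A, g] = ⟨[a,g] : a ∈ A⟩`. -/
def commSub (A : Subgroup G) (g : G) : Subgroup G :=
  Subgroup.closure {c | ∃ a ∈ A, c = pc a g}

/-- The `r`-fold iterate `[A, g, (r)…, g]`. -/
def itcSub (A : Subgroup G) (g : G) : ℕ → Subgroup G
  | 0 => A
  | r + 1 => commSub (itcSub A g r) g

/-- `Λ̃_k`. -/
def LambdaT (p : ℕ) (x y : G) (k : ℕ) : Subgroup G :=
  Subgroup.closure {g | ∃ m n, g = itc (x ^ p ^ (k - 1)) (zz x y m n) (p - 1) ∧
    ((p ^ (k - 1) ≤ m ∧ m < p ^ k ∧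
        max 1 (m - m / p ^ (k - 1) * p ^ (k - 1)) ≤ n ∧ n < p ^ (k - 1)) ∨
      (∃ i, 2 ≤ i ∧ i ≤ p - 2 ∧ m = i * p ^ (k - 1) ∧ n = p ^ (k - 1)))}

/-- `w̃_{i,j,k} = ∏_{t=1}^{p^k−p^{k−1}} [z_{i+t,j+t−1}, x, (p^k−p^{k−1}−t)…, x]`,
factors in order of increasing `t` (reindexed by `t ↦ t+1`). -/
def wwT (p : ℕ) (x y : G) (i j k : ℕ) : G :=
  ((List.range (p ^ k - p ^ (k - 1))).map
    (fun t => itc x (zz x y (i + t + 1) (j + t)) (p ^ k - p ^ (k - 1) - 1 - t))).prod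

/-- `d̃_k(h) = [h,x,(p^k−p^{k−1})…,x]⁻¹ · x^{−p^k} · (x^{p^{k−1}}h)^p`. -/
def ddT (p : ℕ) (x y : G) (k : ℕ) (h : G) : G :=
  (itc x h (p ^ k - p ^ (k - 1)))⁻¹ * (x ^ p ^ k)⁻¹ * (x ^ p ^ (k - 1) * h) ^ p

/-- `L̃_k`, the normal closure of `{w̃_{i,j,k} : i,j ≥ p^{k−1}} ∪ {d̃_k(y)}`. -/
def LsubT (p : ℕ) (x y : G) (k : ℕ) : Subgroup G :=
  Subgroup.normalClosure
    ({g | ∃ i j, p ^ (k - 1) ≤ i ∧ p ^ (k - 1) ≤ j ∧ g = wwT p x y i j k} ∪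
      {ddT p x y k y})

/-- `Γ_{(k)} = ⟨c_j (j ≥ p^{k−1}), z_{m,n} (m > n ≥ 1, m + n ≥ p^{k−1})⟩`. -/
def GammaK (p : ℕ) (x y : G) (k : ℕ) : Subgroup G :=
  Subgroup.closure ({g | ∃ j, p ^ (k - 1) ≤ j ∧ g = cc x y j} ∪
    {g | ∃ m n, 1 ≤ n ∧ n < m ∧ p ^ (k - 1) ≤ m + n ∧ g = zz x y m n})


lemma pc_eq_inv_mul_conj (a b : G) : pc a b = a⁻¹ * (b⁻¹ * a * b) := by
  simp only [pc, mul_assoc]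

lemma conj_eq_mul_pc (a b : G) : b⁻¹ * a * b = a * pc a b := by
  simp only [pc]; group

lemma conj_pc (g a b : G) : g⁻¹ * pc a b * g = pc (g⁻¹ * a * g) (g⁻¹ * b * g) := by
  simp only [pc]; group

lemma pc_eq_one_of_commute {a b : G} (h : Commute a b) : pc a b = 1 := by
  rw [pc, mul_assoc, h.eq]; group

lemma pc_mul_left_of_commute {a b c : G} (h : Commute b (pc a c)) :
    pc (a * b) c = pc a c * pc b c := by
  rw [← h.inv_mul_cancel]; simp only [pc]; group

lemma pc_mul_right_of_commute {a b c : G} (h : Commute c (pc a b)) :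
    pc a (b * c) = pc a c * pc a b := by
  rw [← h.inv_mul_cancel]; simp only [pc]; group

lemma pc_inv_left_of_commute {a b : G} (h : Commute a (pc a b)) : pc a⁻¹ b = (pc a b)⁻¹ := by
  rw [← h.inv_left.inv_right.inv_mul_cancel]; simp only [pc]; group

lemma pc_inv_right_of_commute {a b : G} (h : Commute b (pc a b)) : pc a b⁻¹ = (pc a b)⁻¹ := by
  rw [← h.inv_left.inv_right.inv_mul_cancel]; simp only [pc]; group

lemma Subgroup.pc_mem {K : Subgroup G} {a b : G} (ha : a ∈ K) (hb : b ∈ K) : pc a b ∈ K :=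
  mul_mem (mul_mem (mul_mem (inv_mem ha) (inv_mem hb)) ha) hb

lemma conj_mem_closure {S : Set G} {g : G} (hS : ∀ s ∈ S, g⁻¹ * s * g ∈ Subgroup.closure S)
    {a : G} (ha : a ∈ Subgroup.closure S) : g⁻¹ * a * g ∈ Subgroup.closure S := by
  have hle : Subgroup.closure S ≤ (Subgroup.closure S).comap (MulAut.conj g⁻¹).toMonoidHom :=
    (Subgroup.closure_le _).2 fun s hs => by simpa using hS s hs
  simpa using hle ha

lemma mem_closure_image2_of_bimultiplicative {S : Set G} {f : G → G → G}
    (hl : ∀ a ∈ Subgroup.closure S, ∀ b ∈ Subgroup.closure S, ∀ c ∈ Subgroup.closure S,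
      f (a * b) c = f a c * f b c)
    (hr : ∀ a ∈ Subgroup.closure S, ∀ b ∈ Subgroup.closure S, ∀ c ∈ Subgroup.closure S,
      f a (b * c) = f a b * f a c)
    {a b : G} (ha : a ∈ Subgroup.closure S) (hb : b ∈ Subgroup.closure S) :
    f a b ∈ Subgroup.closure (Set.image2 f S S) := by
  have one_mem := Subgroup.one_mem (Subgroup.closure S)
  have f_one_left : ∀ b ∈ Subgroup.closure S, f 1 b = 1 := fun b hb => by
    simpa using hl 1 one_mem 1 one_mem b hb
  have f_one_right : ∀ a ∈ Subgroup.closure S, f a 1 = 1 := fun a ha => by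
    simpa using hr a ha 1 one_mem 1 one_mem
  induction ha, hb using Subgroup.closure_induction₂ with
  | mem a b ha hb => exact Subgroup.subset_closure (Set.mem_image2_of_mem ha hb)
  | one_left b hb => rw [f_one_left b hb]; exact Subgroup.one_mem _
  | one_right a ha => rw [f_one_right a ha]; exact Subgroup.one_mem _
  | mul_left a a' b ha ha' hb ih ih' => rw [hl a ha a' ha' b hb]; exact mul_mem ih ih'
  | mul_right b b' a hb hb' ha ih ih' => rw [hr a ha b hb b' hb']; exact mul_mem ih ih'
  | inv_left a b ha hb ih =>
    have h := hl a⁻¹ (inv_mem ha) a ha b hb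
    rw [inv_mul_cancel, f_one_left b hb] at h
    rw [eq_inv_of_mul_eq_one_left h.symm]; exact inv_mem ih
  | inv_right a b ha hb ih =>
    have h := hr a ha b⁻¹ (inv_mem hb) b hb
    rw [inv_mul_cancel, f_one_right a ha] at h
    rw [eq_inv_of_mul_eq_one_left h.symm]; exact inv_mem ih

lemma itc_succ (x a : G) (r : ℕ) : itc x a (r + 1) = pc (itc x a r) x := rfl

lemma itc_add (x a : G) (m n : ℕ) : itc x (itc x a m) n = itc x a (m + n) := by
  induction n with
  | zero => rfl
  | succ n ih => rw [itc, ih]; rfl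

def itcDefect (x a b : G) (r : ℕ) : G := (itc x a r * itc x b r)⁻¹ * itc x (a * b) r

lemma itc_mul (x a b : G) (r : ℕ) :
    itc x (a * b) r = itc x a r * itc x b r * itcDefect x a b r := by
  simp only [itcDefect, mul_inv_cancel_left]

lemma itcDefect_zero (x a b : G) : itcDefect x a b 0 = 1 := by
  simp only [itcDefect, itc]; group

structure IsClassTwoPair (H Z : Subgroup G) (x : G) : Prop where
  le : Z ≤ H
  commute : ∀ z ∈ Z, ∀ h ∈ H, Commute z h
  pc_mem : ∀ u ∈ H, ∀ v ∈ H, pc u v ∈ Z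
  pc_x_mem : ∀ h ∈ H, pc h x ∈ H
  pc_x_mem' : ∀ z ∈ Z, pc z x ∈ Z

namespace IsClassTwoPair

variable {H Z : Subgroup G} {x : G} (hP : IsClassTwoPair H Z x)
include hP

lemma commute_pc {u v w : G} (hu : u ∈ H) (hv : v ∈ H) (hw : w ∈ H) : Commute w (pc u v) :=
  (hP.commute _ (hP.pc_mem u hu v hv) w hw).symm

lemma pc_mul_left {u v w : G} (hu : u ∈ H) (hv : v ∈ H) (hw : w ∈ H) :
    pc (u * v) w = pc u w * pc v w :=
  pc_mul_left_of_commute (hP.commute_pc hu hw hv)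

lemma pc_mul_right {u v w : G} (hu : u ∈ H) (hv : v ∈ H) (hw : w ∈ H) :
    pc u (v * w) = pc u v * pc u w := by
  rw [pc_mul_right_of_commute (hP.commute_pc hu hv hw)]
  exact hP.commute _ (hP.pc_mem u hu w hw) _ (hP.le (hP.pc_mem u hu v hv))

lemma pc_mul_x {u v : G} (hu : u ∈ H) (hv : v ∈ H) :
    pc (u * v) x = pc u x * pc v x * pc (pc u x) v := by
  have h : pc (u * v) x = v⁻¹ * pc u x * v * pc v x := by simp only [pc]; group
  rw [h, conj_eq_mul_pc, mul_assoc,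
    (hP.commute _ (hP.pc_mem _ (hP.pc_x_mem u hu) v hv) _ (hP.pc_x_mem v hv)).eq, mul_assoc]

lemma pc_mul_x_of_mem {u z : G} (hu : u ∈ H) (hz : z ∈ Z) :
    pc (u * z) x = pc u x * pc z x := by
  rw [hP.pc_mul_x hu (hP.le hz),
    pc_eq_one_of_commute (hP.commute z hz _ (hP.pc_x_mem u hu)).symm, mul_one]

lemma itc_mem {h : G} (hh : h ∈ H) (r : ℕ) : itc x h r ∈ H := by
  induction r with
  | zero => exact hh
  | succ r ih => exact hP.pc_x_mem _ ih

lemma itc_mem' {z : G} (hz : z ∈ Z) (r : ℕ) : itc x z r ∈ Z := by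
  induction r with
  | zero => exact hz
  | succ r ih => exact hP.pc_x_mem' _ ih

lemma pc_x_list_prod {L : List G} (hL : ∀ g ∈ L, g ∈ Z) :
    pc L.prod x = (L.map (pc · x)).prod := by
  induction L with
  | nil => exact pc_eq_one_of_commute (Commute.one_left x)
  | cons a L ih =>
    have hLZ : ∀ g ∈ L, g ∈ Z := fun g hg => hL g (List.mem_cons_of_mem a hg)
    rw [List.prod_cons, List.map_cons, List.prod_cons,
      hP.pc_mul_x_of_mem (hP.le (hL a List.mem_cons_self)) (Z.list_prod_mem hLZ), ih hLZ]

lemma itcDefect_succ_of_mem {a b : G} (ha : a ∈ H) (hb : b ∈ H) (r : ℕ)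
    (hζ : itcDefect x a b r ∈ Z) :
    itcDefect x a b (r + 1) = pc (itc x a (r + 1)) (itc x b r) * pc (itcDefect x a b r) x := by
  have hA := hP.itc_mem ha r
  have hB := hP.itc_mem hb r
  rw [itcDefect, itc_succ x (a * b), itc_mul, hP.pc_mul_x_of_mem (mul_mem hA hB) hζ,
    hP.pc_mul_x hA hB, itc_succ x a, itc_succ x b]
  group

lemma itcDefect_mem {a b : G} (ha : a ∈ H) (hb : b ∈ H) (r : ℕ) : itcDefect x a b r ∈ Z := by
  induction r with
  | zero => rw [itcDefect_zero]; exact one_mem Z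
  | succ r ih =>
    rw [hP.itcDefect_succ_of_mem ha hb r ih]
    exact mul_mem (hP.pc_mem _ (hP.itc_mem ha _) _ (hP.itc_mem hb _)) (hP.pc_x_mem' _ ih)

lemma itcDefect_succ {a b : G} (ha : a ∈ H) (hb : b ∈ H) (r : ℕ) :
    itcDefect x a b (r + 1) = pc (itc x a (r + 1)) (itc x b r) * pc (itcDefect x a b r) x :=
  hP.itcDefect_succ_of_mem ha hb r (hP.itcDefect_mem ha hb r)

lemma itcDefect_mul_left {a a' b : G} (ha : a ∈ H) (ha' : a' ∈ H) (hb : b ∈ H) (r : ℕ) :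
    itcDefect x (a * a') b r = itcDefect x a b r * itcDefect x a' b r := by
  induction r with
  | zero => simp only [itcDefect_zero, mul_one]
  | succ r ih =>
    have hA := hP.itc_mem ha (r + 1)
    have hA' := hP.itc_mem ha' (r + 1)
    have hB := hP.itc_mem hb r
    have hζ := hP.itcDefect_mem ha hb r
    have hζ' := hP.itcDefect_mem ha' hb r
    rw [hP.itcDefect_succ (mul_mem ha ha') hb, hP.itcDefect_succ ha hb,
      hP.itcDefect_succ ha' hb, ih, itc_mul,
      hP.pc_mul_left (mul_mem hA hA') (hP.le (hP.itcDefect_mem ha ha' _)) hB,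
      pc_eq_one_of_commute (hP.commute _ (hP.itcDefect_mem ha ha' _) _ hB), mul_one,
      hP.pc_mul_left hA hA' hB, hP.pc_mul_x_of_mem (hP.le hζ) hζ', mul_assoc, mul_assoc,
      (hP.commute _ (hP.pc_mem _ hA' _ hB) _ (hP.le (hP.pc_x_mem' _ hζ))).left_comm]

lemma itcDefect_mul_right {a b b' : G} (ha : a ∈ H) (hb : b ∈ H) (hb' : b' ∈ H) (r : ℕ) :
    itcDefect x a (b * b') r = itcDefect x a b r * itcDefect x a b' r := by
  induction r with
  | zero => simp only [itcDefect_zero, mul_one]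
  | succ r ih =>
    have hA := hP.itc_mem ha (r + 1)
    have hB := hP.itc_mem hb r
    have hB' := hP.itc_mem hb' r
    have hζ := hP.itcDefect_mem ha hb r
    have hζ' := hP.itcDefect_mem ha hb' r
    rw [hP.itcDefect_succ ha (mul_mem hb hb'), hP.itcDefect_succ ha hb,
      hP.itcDefect_succ ha hb', ih, itc_mul,
      hP.pc_mul_right hA (mul_mem hB hB') (hP.le (hP.itcDefect_mem hb hb' _)),
      pc_eq_one_of_commute (hP.commute _ (hP.itcDefect_mem hb hb' _) _ hA).symm, mul_one,
      hP.pc_mul_right hA hB hB', hP.pc_mul_x_of_mem (hP.le hζ) hζ', mul_assoc, mul_assoc,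
      (hP.commute _ (hP.pc_mem _ hA _ hB') _ (hP.le (hP.pc_x_mem' _ hζ))).left_comm]

end IsClassTwoPair

section Generators

variable (x y : G)

lemma itc_cc {i : ℕ} (hi : 1 ≤ i) (s : ℕ) : itc x (cc x y i) s = cc x y (i + s) := by
  rw [cc, itc_add, cc]; congr 1; omega

lemma cc_mem {i : ℕ} (hi : 1 ≤ i) : cc x y i ∈ Hsub x y :=
  Subgroup.subset_closure ⟨i, hi, rfl⟩

lemma zz_mem {m n : ℕ} (hm : 1 ≤ m) (hn : 1 ≤ n) : zz x y m n ∈ ZsubP x y :=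
  Subgroup.subset_closure ⟨m, n, hm, hn, rfl⟩

lemma ZsubP_le_Hsub : ZsubP x y ≤ Hsub x y :=
  (Subgroup.closure_le _).2 <| by
    rintro _ ⟨m, n, hm, hn, rfl⟩
    exact Subgroup.pc_mem (cc_mem x y hm) (cc_mem x y hn)

variable {x y}

lemma conj_mem_Hsub {h : G} (hh : h ∈ Hsub x y) : x⁻¹ * h * x ∈ Hsub x y := by
  refine conj_mem_closure ?_ hh
  rintro _ ⟨i, hi, rfl⟩
  rw [conj_eq_mul_pc, show pc (cc x y i) x = cc x y (i + 1) from itc_cc x y hi 1]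
  exact mul_mem (cc_mem x y hi) (cc_mem x y (by omega))

variable (hca : ∀ z ∈ ZsubP x y, ∀ h ∈ Hsub x y, z * h = h * z)
include hca

lemma pc_mem_ZsubP {u v : G} (hu : u ∈ Hsub x y) (hv : v ∈ Hsub x y) : pc u v ∈ ZsubP x y := by
  induction hu, hv using Subgroup.closure_induction₂ with
  | mem _ _ hu hv =>
    obtain ⟨i, hi, rfl⟩ := hu
    obtain ⟨j, hj, rfl⟩ := hv
    exact zz_mem x y hi hj
  | one_left v _ => rw [pc_eq_one_of_commute (Commute.one_left v)]; exact one_mem _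
  | one_right u _ => rw [pc_eq_one_of_commute (Commute.one_right u)]; exact one_mem _
  | mul_left u u' v _ hu' _ ih ih' =>
    rw [pc_mul_left_of_commute (hca _ ih u' hu').symm]; exact mul_mem ih ih'
  | mul_right v v' u _ hv' _ ih ih' =>
    rw [pc_mul_right_of_commute (hca _ ih v' hv').symm]; exact mul_mem ih' ih
  | inv_left u v hu _ ih => rw [pc_inv_left_of_commute (hca _ ih u hu).symm]; exact inv_mem ih
  | inv_right u v _ hv ih => rw [pc_inv_right_of_commute (hca _ ih v hv).symm]; exact inv_mem ih

lemma isClassTwoPair : IsClassTwoPair (Hsub x y) (ZsubP x y) x where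
  le := ZsubP_le_Hsub x y
  commute := hca
  pc_mem _ hu _ hv := pc_mem_ZsubP hca hu hv
  pc_x_mem _ hh := by
    rw [pc_eq_inv_mul_conj]
    exact mul_mem (inv_mem hh) (conj_mem_Hsub hh)
  pc_x_mem' z hz := by
    rw [pc_eq_inv_mul_conj]
    refine mul_mem (inv_mem hz) (conj_mem_closure ?_ hz)
    rintro _ ⟨m, n, hm, hn, rfl⟩
    rw [zz, conj_pc]
    exact pc_mem_ZsubP hca (conj_mem_Hsub (cc_mem x y hm)) (conj_mem_Hsub (cc_mem x y hn))

lemma itcDefect_cc {i j : ℕ} (hi : 1 ≤ i) (hj : 1 ≤ j) (r : ℕ) :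
    itcDefect x (cc x y i) (cc x y j) r =
      ((List.range r).map fun t => itc x (zz x y (i + t + 1) (j + t)) (r - 1 - t)).prod := by
  have hP := isClassTwoPair hca
  induction r with
  | zero => rw [itcDefect_zero]; rfl
  | succ r ih =>
    have hmem (e : ℕ → ℕ) :
        ∀ g ∈ (List.range r).map fun t => itc x (zz x y (i + t + 1) (j + t)) (e t),
          g ∈ ZsubP x y := by
      simp only [List.mem_map]
      rintro _ ⟨t, -, rfl⟩
      exact hP.itc_mem' (zz_mem x y (by omega) (by omega)) _
    have hshift :
        ((List.range r).map fun t => itc x (zz x y (i + t + 1) (j + t)) (r - 1 - t)).map (pc · x) =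
          (List.range r).map fun t => itc x (zz x y (i + t + 1) (j + t)) (r + 1 - 1 - t) := by
      rw [List.map_map]
      refine List.map_congr_left fun t ht => ?_
      rw [Function.comp_apply, ← itc_succ]
      congr 1
      have := List.mem_range.1 ht
      omega
    rw [hP.itcDefect_succ (cc_mem x y hi) (cc_mem x y hj), ih, hP.pc_x_list_prod (hmem _),
      hshift, itc_cc x y hi, itc_cc x y hj, List.range_succ, List.map_append, List.prod_append,
      List.map_singleton, List.prod_singleton, show r + 1 - 1 - r = 0 by omega, ← add_assoc]
    exact (hP.commute _ (zz_mem x y (by omega) (by omega)) _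
      (hP.le (Subgroup.list_prod_mem _ (hmem _)))).eq

lemma wwP_eq_itcDefect (p k : ℕ) {i j : ℕ} (hi : 1 ≤ i) (hj : 1 ≤ j) :
    wwP p x y i j k = itcDefect x (cc x y i) (cc x y j) (p ^ k - 1) := by
  rw [itcDefect_cc hca hi hj, wwP, Nat.sub_sub]

end Generators

theorem lemma_Lk_odd_ii_general (p : ℕ) (x y : G)
    (hca : ∀ z ∈ ZsubP x y, ∀ h ∈ Hsub x y, z * h = h * z)
    (k : ℕ) (h₁ h₂ : G) (hh₁ : h₁ ∈ Hsub x y) (hh₂ : h₂ ∈ Hsub x y) :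
    (itc x h₁ (p ^ k - 1) * itc x h₂ (p ^ k - 1))⁻¹ * itc x (h₁ * h₂) (p ^ k - 1) ∈
      LsubP p x y k := by
  have hP := isClassTwoPair hca
  have hw : itcDefect x h₁ h₂ (p ^ k - 1) ∈
      Subgroup.closure {g | ∃ i j, 1 ≤ i ∧ 1 ≤ j ∧ g = wwP p x y i j k} := by
    refine Subgroup.closure_mono ?_ (mem_closure_image2_of_bimultiplicative
      (f := fun a b => itcDefect x a b (p ^ k - 1))
      (fun a ha b hb c hc => hP.itcDefect_mul_left ha hb hc _)
      (fun a ha b hb c hc => hP.itcDefect_mul_right ha hb hc _) hh₁ hh₂)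
    rintro _ ⟨_, ⟨i, hi, rfl⟩, _, ⟨j, hj, rfl⟩, rfl⟩
    exact ⟨i, j, hi, hj, (wwP_eq_itcDefect hca p k hi hj).symm⟩
  exact (Subgroup.closure_le _).2
    (fun g hg => Subgroup.subset_normalClosure (Or.inl (Or.inl hg))) hw

theorem lemma_Lk_odd_ii (p : ℕ) (hp : p.Prime) (hodd : Odd p) (x y : G)
    (hca : ∀ z ∈ ZsubP x y, ∀ h ∈ Hsub x y, z * h = h * z)
    (hHp : ∀ h ∈ Hsub x y, h ^ p = 1)
    (k : ℕ) (hk : 1 ≤ k) (h₁ h₂ : G) (hh₁ : h₁ ∈ Hsub x y) (hh₂ : h₂ ∈ Hsub x y) :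
    (itc x h₁ (p ^ k - 1) * itc x h₂ (p ^ k - 1))⁻¹ * itc x (h₁ * h₂) (p ^ k - 1) ∈
      LsubP p x y k :=
  lemma_Lk_odd_ii_general p x y hca k h₁ h₂ hh₁ hh₂

end Paper
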